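/- arXiv:1807.04084 — 4 statements merged into one kernel-verified Lean document; each statement's English description precedes it below -/
import Mathlib

section
/- Let (C, ⊗, I) and (D, ⊕, J) be monoidal categories and let L ⊣ R be an adjunction with L : C ⥤ D and R : D ⥤ C, such that the unit η : Id_C ⟶ L ⋙ R is a natural isomorphism and L is a strong monoidal functor. Then the category Mon(C) of monoid objects in C is equivalent to the full subcategory of Mon(D) consisting of those monoid objects (M, m, e) whose underlying object M carries a coalgebra structure for the comonad L∘R, equivalently for which the counit component ε_M : L(R(M)) ⟶ M is an isomorphism. -/
open CategoryTheory Functor MonoidalCategory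

/-- Let `L ⊣ R` be an adjunction between monoidal categories whose unit is a natural
isomorphism and where `L` is strong monoidal.  Then `Mon_ C` is equivalent to the full
subcategory of `Mon_ D` consisting of the monoid objects whose underlying object has an
invertible counit component (equivalently, carries an `L ⋙ R`-coalgebra structure). -/
theorem monoids_equiv_coalgebra_monoids
    {C D : Type*} [Category C] [Category D]
    [MonoidalCategory C] [MonoidalCategory D]
    (L : C ⥤ D) (R : D ⥤ C) (adj : L ⊣ R)
    [L.Monoidal] [IsIso adj.unit] :
    Nonempty (Mon C ≌ ObjectProperty.FullSubcategory fun N : Mon D => IsIso (adj.counit.app N.X)) := by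
  letI : R.LaxMonoidal := adj.rightAdjointLaxMonoidal
  haveI : adj.IsMonoidal := inferInstance
  have hL : L.FullyFaithful := adj.fullyFaithfulLOfIsIsoUnit
  open Functor.LaxMonoidal Functor.OplaxMonoidal in
  -- the counit is invertible on objects in the image of `L`
  have hcounit : ∀ X : C, IsIso (adj.counit.app (L.obj X)) := fun X => by
    exact IsIso.of_isIso_fac_left (h := 𝟙 (L.obj X)) (adj.left_triangle_components X)
  -- the candidate functor
  let F : Mon C ⥤ ObjectProperty.FullSubcategory fun N : Mon D => IsIso (adj.counit.app N.X) :=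
    ObjectProperty.lift _ L.mapMon fun M => hcounit M.X
  -- faithful
  haveI : L.mapMon.Faithful :=
    ⟨fun {M N f g} h => by
      ext
      exact hL.map_injective (congrArg Mon.Hom.hom h)⟩
  haveI : F.Faithful := Functor.Faithful.of_comp_iso (ObjectProperty.liftCompιIso _ L.mapMon _)
  -- full
  haveI : L.mapMon.Full :=
    ⟨fun {M N} g => by
      refine ⟨Mon.Hom.mk' (hL.preimage g.hom) ?_ ?_, ?_⟩
      · apply hL.map_injective
        have h1 : (LaxMonoidal.ε L ≫ L.map (MonObj.one : 𝟙_ C ⟶ M.X)) ≫ g.hom =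
            LaxMonoidal.ε L ≫ L.map (MonObj.one : 𝟙_ C ⟶ N.X) := IsMonHom.one_hom g.hom
        erw [Category.assoc, cancel_epi (LaxMonoidal.ε L)] at h1
        erw [Functor.map_comp, hL.map_preimage, h1]
      · apply hL.map_injective
        have h2 : (LaxMonoidal.μ L M.X M.X ≫ L.map (MonObj.mul : M.X ⊗ M.X ⟶ M.X)) ≫ g.hom =
            (g.hom ⊗ₘ g.hom) ≫ LaxMonoidal.μ L N.X N.X ≫ L.map (MonObj.mul : N.X ⊗ N.X ⟶ N.X) :=
          IsMonHom.mul_hom g.hom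
        erw [Category.assoc] at h2
        erw [Functor.map_comp, Functor.map_comp, hL.map_preimage,
          Functor.Monoidal.map_tensor, hL.map_preimage, Category.assoc, Category.assoc,
          ← h2]
        erw [Functor.Monoidal.δ_μ_assoc]
        rfl
      · ext
        exact hL.map_preimage g.hom⟩
  haveI : F.Full := Functor.Full.of_comp_faithful_iso (ObjectProperty.liftCompιIso _ L.mapMon _)
  -- essentially surjective
  haveI : F.EssSurj := by
    constructor
    rintro ⟨N, hN⟩
    refine ⟨R.mapMon.obj N, ⟨?_⟩⟩
    let monHom : L.mapMon.obj (R.mapMon.obj N) ⟶ N :=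
      Mon.Hom.mk' (adj.counit.app N.X)
        (by
          change (LaxMonoidal.ε L ≫ L.map (LaxMonoidal.ε R ≫ R.map (MonObj.one : 𝟙_ D ⟶ N.X))) ≫
            adj.counit.app N.X = (MonObj.one : 𝟙_ D ⟶ N.X)
          erw [Functor.map_comp, Category.assoc, Category.assoc, adj.counit_naturality,
            adj.map_ε_comp_counit_app_unit_assoc]
          simp)
        (by
          change (LaxMonoidal.μ L (R.obj N.X) (R.obj N.X) ≫
            L.map (LaxMonoidal.μ R N.X N.X ≫ R.map (MonObj.mul : N.X ⊗ N.X ⟶ N.X))) ≫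
            adj.counit.app N.X = (adj.counit.app N.X ⊗ₘ adj.counit.app N.X) ≫ (MonObj.mul : N.X ⊗ N.X ⟶ N.X)
          erw [Functor.map_comp, Category.assoc, Category.assoc, adj.counit_naturality,
            adj.map_μ_comp_counit_app_tensor_assoc]
          simp)
    haveI : IsIso ((Mon.forget D).map monHom) := by dsimp [monHom]; exact hN
    haveI : IsIso monHom := isIso_of_reflects_iso monHom (Mon.forget D)
    exact (ObjectProperty.ι _).preimageIso
      (show (ObjectProperty.ι _).obj (F.obj (R.mapMon.obj N)) ≅
          (ObjectProperty.ι _).obj ⟨N, hN⟩ from asIso monHom)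
  haveI : F.IsEquivalence := {}
  exact ⟨F.asEquivalence⟩
end

section
/- Let (C, ⊗, I) and (D, ⊕, J) be monoidal categories and let L ⊣ R be an adjunction with L : C ⥤ D and R : D ⥤ C, whose counit ε : L∘R ⟶ Id_D is a natural isomorphism. Suppose R is a lax monoidal functor with structure maps γ₀ : I ⟶ R(J) and γ_{A,B} : R(A) ⊗ R(B) ⟶ R(A ⊕ B), and suppose that the morphisms L(γ₀) : L(I) ⟶ L(R(J)) and L(γ_{L(X),Y} ∘ (η_X ⊗ id_{R(Y)})) : L(X ⊗ R(Y)) ⟶ L(R(L(X) ⊕ Y)) are invertible for all objects X of C and Y of D. Then the category Mon(D) of monoid objects in D is equivalent to the full subcategory of Mon(C) consisting of those monoid objects (M, m, e) whose underlying object M carries an algebra structure for the monad R∘L, equivalently for which the unit component η_M : M ⟶ R(L(M)) is an isomorphism. -/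
open CategoryTheory Functor MonoidalCategory

set_option linter.unusedSectionVars false

open Functor.LaxMonoidal

namespace MonoidsEquivAux

variable {C D : Type*} [Category C] [Category D]
  [MonoidalCategory C] [MonoidalCategory D]
  (L : C ⥤ D) (R : D ⥤ C) (adj : L ⊣ R) [R.LaxMonoidal] [IsIso adj.counit]

lemma isIso_unit_app_R (Y : D) : IsIso (adj.unit.app (R.obj Y)) := by
  have h1 : adj.unit.app (R.obj Y) = inv (R.map (adj.counit.app Y)) := by
    apply IsIso.eq_inv_of_inv_hom_id
    exact adj.right_triangle_components Y
  exact h1 ▸ inferInstance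

include adj in
lemma L_cancel {W : C} {Z Y : D} (t : W ⟶ R.obj Z) (ht : IsIso (L.map t))
    {x y : Z ⟶ Y} (hxy : t ≫ R.map x = t ≫ R.map y) : x = y := by
  have h1 := congrArg L.map hxy
  rw [L.map_comp, L.map_comp] at h1
  haveI := ht
  have h2 : L.map (R.map x) = L.map (R.map y) := (cancel_epi (L.map t)).mp h1
  calc x = inv (adj.counit.app Z) ≫ adj.counit.app Z ≫ x := by simp
    _ = inv (adj.counit.app Z) ≫ L.map (R.map x) ≫ adj.counit.app Y := by
        simp
    _ = inv (adj.counit.app Z) ≫ L.map (R.map y) ≫ adj.counit.app Y := by rw [h2]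
    _ = inv (adj.counit.app Z) ≫ adj.counit.app Z ≫ y := by simp
    _ = y := by simp

lemma unit_comp_R_eq {W : C} {Z : D} (x : W ⟶ R.obj Z) :
    adj.unit.app W ≫ R.map (L.map x ≫ adj.counit.app Z) = x := by
  simp

lemma whisker_mu_eq {W : C} {Z : D} (x : W ⟶ R.obj Z) (Y : D) :
    (x ▷ R.obj Y) ≫ μ R Z Y =
      ((adj.unit.app W ⊗ₘ 𝟙 (R.obj Y)) ≫ μ R (L.obj W) Y) ≫
        R.map ((L.map x ≫ adj.counit.app Z) ▷ Y) := by
  conv_lhs => rw [← unit_comp_R_eq L R adj x]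
  rw [tensorHom_id, comp_whiskerRight]
  simp only [Category.assoc]
  congr 1
  exact μ_natural_left (F := R) (L.map x ≫ adj.counit.app Z) Y

lemma isIso_L_whisker_mu
    (h : ∀ (X : C) (Y : D),
      IsIso (L.map ((adj.unit.app X ⊗ₘ 𝟙 (R.obj Y)) ≫ LaxMonoidal.μ R (L.obj X) Y)))
    {W : C} {Z : D} (x : W ⟶ R.obj Z) (hx : IsIso (L.map x)) (Y : D) :
    IsIso (L.map ((x ▷ R.obj Y) ≫ μ R Z Y)) := by
  rw [whisker_mu_eq L R adj x Y, L.map_comp]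
  haveI := hx
  haveI := h W Y
  infer_instance

lemma isIso_L_mu
    (h : ∀ (X : C) (Y : D),
      IsIso (L.map ((adj.unit.app X ⊗ₘ 𝟙 (R.obj Y)) ≫ LaxMonoidal.μ R (L.obj X) Y)))
    (A B : D) : IsIso (L.map (μ R A B)) := by
  have := isIso_L_whisker_mu L R adj h (𝟙 (R.obj A))
    (by rw [L.map_id]; infer_instance) B
  simpa using this

lemma key_comp {W : C} {Z : D} (f : W ⟶ R.obj Z) (hf : IsIso (L.map f))
    {Y' : D} (g : W ⟶ R.obj Y') :
    f ≫ R.map (inv (L.map f ≫ adj.counit.app Z) ≫ L.map g ≫ adj.counit.app Y') = g := by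
  haveI := hf
  have h1 : f ≫ R.map (inv (L.map f ≫ adj.counit.app Z)) = adj.unit.app W := by
    rw [R.map_inv, IsIso.comp_inv_eq]
    exact (unit_comp_R_eq L R adj f).symm
  rw [R.map_comp, R.map_comp, ← Category.assoc, h1, ← Category.assoc, adj.unit_naturality,
    Category.assoc, adj.right_triangle_components, Category.comp_id]

/-- Transfer a morphism `W ⟶ R.obj Y'` along an "`L`-inverted" morphism `W ⟶ R.obj Z`. -/
noncomputable def lAdjArrow {W : C} {Z : D} (f : W ⟶ R.obj Z) (hf : IsIso (L.map f)) {Y' : D}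
    (g : W ⟶ R.obj Y') : Z ⟶ Y' :=
  haveI := hf
  inv (L.map f ≫ adj.counit.app Z) ≫ L.map g ≫ adj.counit.app Y'

lemma comp_R_lAdjArrow {W : C} {Z : D} (f : W ⟶ R.obj Z) (hf : IsIso (L.map f)) {Y' : D}
    (g : W ⟶ R.obj Y') : f ≫ R.map (lAdjArrow L R adj f hf g) = g :=
  key_comp L R adj f hf g

section MkMon

variable (h₀ : IsIso (L.map (LaxMonoidal.ε R)))
  (h : ∀ (X : C) (Y : D),
    IsIso (L.map ((adj.unit.app X ⊗ₘ 𝟙 (R.obj Y)) ≫ LaxMonoidal.μ R (L.obj X) Y)))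
  (Y : D) (one : 𝟙_ C ⟶ R.obj Y) (m : R.obj Y ⊗ R.obj Y ⟶ R.obj Y)
  (hone_mul : (one ▷ R.obj Y) ≫ m = (λ_ (R.obj Y)).hom)
  (hmul_one : (R.obj Y ◁ one) ≫ m = (ρ_ (R.obj Y)).hom)
  (hassoc : (m ▷ R.obj Y) ≫ m = (α_ (R.obj Y) (R.obj Y) (R.obj Y)).hom ≫ (R.obj Y ◁ m) ≫ m)

lemma lu_eq : (LaxMonoidal.ε R ▷ R.obj Y) ≫ μ R (𝟙_ D) Y
    = (λ_ (R.obj Y)).hom ≫ R.map (λ_ Y).inv := by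
  rw [left_unitality (F := R) Y]
  simp only [Category.assoc, ← R.map_comp, Iso.hom_inv_id, R.map_id, Category.comp_id]

lemma ru_eq : (R.obj Y ◁ LaxMonoidal.ε R) ≫ μ R Y (𝟙_ D)
    = (ρ_ (R.obj Y)).hom ≫ R.map (ρ_ Y).inv := by
  rw [right_unitality (F := R) Y]
  simp only [Category.assoc, ← R.map_comp, Iso.hom_inv_id, R.map_id, Category.comp_id]

/-- Lift a monoid structure on `R.obj Y` to a monoid structure on `Y`. -/
noncomputable def mkMonObjD : MonObj Y where
  one := lAdjArrow L R adj (LaxMonoidal.ε R) h₀ one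
  mul := lAdjArrow L R adj (μ R Y Y) (isIso_L_mu L R adj h Y Y) m
  one_mul := by
    apply L_cancel L R adj ((LaxMonoidal.ε R ▷ R.obj Y) ≫ μ R (𝟙_ D) Y)
    · rw [lu_eq, L.map_comp]
      infer_instance
    · have k1 := comp_R_lAdjArrow L R adj (LaxMonoidal.ε R) h₀ one
      have k2 := comp_R_lAdjArrow L R adj (μ R Y Y) (isIso_L_mu L R adj h Y Y) m
      calc ((LaxMonoidal.ε R ▷ R.obj Y) ≫ μ R (𝟙_ D) Y) ≫
            R.map ((lAdjArrow L R adj (LaxMonoidal.ε R) h₀ one ▷ Y) ≫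
              lAdjArrow L R adj (μ R Y Y) (isIso_L_mu L R adj h Y Y) m)
          = (LaxMonoidal.ε R ▷ R.obj Y) ≫
              (R.map (lAdjArrow L R adj (LaxMonoidal.ε R) h₀ one) ▷ R.obj Y) ≫
              μ R Y Y ≫ R.map (lAdjArrow L R adj (μ R Y Y) (isIso_L_mu L R adj h Y Y) m) := by
            rw [R.map_comp]
            simp only [Category.assoc]
            rw [← reassoc_of% (μ_natural_left (F := R)
              (lAdjArrow L R adj (LaxMonoidal.ε R) h₀ one) Y)]
        _ = (one ▷ R.obj Y) ≫ m := by
            rw [k2, ← comp_whiskerRight_assoc, k1]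
        _ = (λ_ (R.obj Y)).hom := hone_mul
        _ = ((LaxMonoidal.ε R ▷ R.obj Y) ≫ μ R (𝟙_ D) Y) ≫ R.map (λ_ Y).hom := by
            rw [Category.assoc, ← left_unitality (F := R) Y]
  mul_one := by
    apply L_cancel L R adj ((R.obj Y ◁ LaxMonoidal.ε R) ≫ μ R Y (𝟙_ D))
    · rw [ru_eq, L.map_comp]
      infer_instance
    · have k1 := comp_R_lAdjArrow L R adj (LaxMonoidal.ε R) h₀ one
      have k2 := comp_R_lAdjArrow L R adj (μ R Y Y) (isIso_L_mu L R adj h Y Y) m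
      calc ((R.obj Y ◁ LaxMonoidal.ε R) ≫ μ R Y (𝟙_ D)) ≫
            R.map ((Y ◁ lAdjArrow L R adj (LaxMonoidal.ε R) h₀ one) ≫
              lAdjArrow L R adj (μ R Y Y) (isIso_L_mu L R adj h Y Y) m)
          = (R.obj Y ◁ LaxMonoidal.ε R) ≫
              (R.obj Y ◁ R.map (lAdjArrow L R adj (LaxMonoidal.ε R) h₀ one)) ≫
              μ R Y Y ≫ R.map (lAdjArrow L R adj (μ R Y Y) (isIso_L_mu L R adj h Y Y) m) := by
            rw [R.map_comp]
            simp only [Category.assoc]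
            rw [← reassoc_of% (μ_natural_right (F := R) Y
              (lAdjArrow L R adj (LaxMonoidal.ε R) h₀ one))]
        _ = (R.obj Y ◁ one) ≫ m := by
            rw [k2, ← MonoidalCategory.whiskerLeft_comp_assoc, k1]
        _ = (ρ_ (R.obj Y)).hom := hmul_one
        _ = ((R.obj Y ◁ LaxMonoidal.ε R) ≫ μ R Y (𝟙_ D)) ≫ R.map (ρ_ Y).hom := by
            rw [Category.assoc, ← right_unitality (F := R) Y]
  mul_assoc := by
    apply L_cancel L R adj ((μ R Y Y ▷ R.obj Y) ≫ μ R (Y ⊗ Y) Y)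
    · exact isIso_L_whisker_mu L R adj h (μ R Y Y) (isIso_L_mu L R adj h Y Y) Y
    · have k2 := comp_R_lAdjArrow L R adj (μ R Y Y) (isIso_L_mu L R adj h Y Y) m
      set u := lAdjArrow L R adj (μ R Y Y) (isIso_L_mu L R adj h Y Y) m with hu
      calc ((μ R Y Y ▷ R.obj Y) ≫ μ R (Y ⊗ Y) Y) ≫ R.map ((u ▷ Y) ≫ u)
          = (μ R Y Y ▷ R.obj Y) ≫ (R.map u ▷ R.obj Y) ≫ μ R Y Y ≫ R.map u := by
            rw [R.map_comp]
            simp only [Category.assoc]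
            rw [← reassoc_of% (μ_natural_left (F := R) u Y)]
        _ = (m ▷ R.obj Y) ≫ m := by rw [k2, ← comp_whiskerRight_assoc, k2]
        _ = (α_ (R.obj Y) (R.obj Y) (R.obj Y)).hom ≫ (R.obj Y ◁ m) ≫ m := hassoc
        _ = (α_ (R.obj Y) (R.obj Y) (R.obj Y)).hom ≫ (R.obj Y ◁ (μ R Y Y ≫ R.map u)) ≫ μ R Y Y ≫ R.map u := by
            rw [k2]
        _ = (α_ (R.obj Y) (R.obj Y) (R.obj Y)).hom ≫ (R.obj Y ◁ μ R Y Y) ≫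
              μ R Y (Y ⊗ Y) ≫ R.map (Y ◁ u) ≫ R.map u := by
            rw [MonoidalCategory.whiskerLeft_comp]
            simp only [Category.assoc]
            rw [reassoc_of% (μ_natural_right (F := R) Y u)]
        _ = ((μ R Y Y ▷ R.obj Y) ≫ μ R (Y ⊗ Y) Y) ≫ R.map ((α_ Y Y Y).hom ≫ (Y ◁ u) ≫ u) := by
            rw [R.map_comp, R.map_comp]
            simp only [Category.assoc]
            rw [← associativity_assoc (F := R) Y Y Y]

/-- Lift a monoid structure on `R.obj Y` to a monoid structure on `Y`. -/
noncomputable def mkMonD : Mon D :=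
  { X := Y, mon := mkMonObjD L R adj h₀ h Y one m hone_mul hmul_one hassoc }

noncomputable def mapMonMkMonDIso :
    R.mapMon.obj (mkMonD L R adj h₀ h Y one m hone_mul hmul_one hassoc)
      ≅ { X := R.obj Y, mon := MonObj.mk one m hone_mul hmul_one hassoc } :=
  Mon.mkIso (Iso.refl _)
    (by
      show (ε R ≫ R.map (lAdjArrow L R adj (LaxMonoidal.ε R) h₀ one)) ≫ 𝟙 (R.obj Y) = one
      simpa using comp_R_lAdjArrow L R adj (LaxMonoidal.ε R) h₀ one)
    (by
      show (μ R Y Y ≫ R.map (lAdjArrow L R adj (μ R Y Y) (isIso_L_mu L R adj h Y Y) m)) ≫ 𝟙 (R.obj Y) =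
        (𝟙 (R.obj Y) ⊗ₘ 𝟙 (R.obj Y)) ≫ m
      simpa using comp_R_lAdjArrow L R adj (μ R Y Y) (isIso_L_mu L R adj h Y Y) m)

end MkMon

end MonoidsEquivAux

namespace MonoidsEquivAux

variable {C D : Type*} [Category C] [Category D]
  [MonoidalCategory C] [MonoidalCategory D]
  (L : C ⥤ D) (R : D ⥤ C) (adj : L ⊣ R) [R.LaxMonoidal] [IsIso adj.counit]

lemma unit_app_R_eq_inv (A : D) :
    adj.unit.app (R.obj A) = inv (R.map (adj.counit.app A)) := by
  apply IsIso.eq_inv_of_inv_hom_id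
  exact adj.right_triangle_components A

lemma R_map_conj {A B : D} (φ : R.obj A ⟶ R.obj B) :
    R.map (inv (adj.counit.app A) ≫ L.map φ ≫ adj.counit.app B) = φ := by
  rw [R.map_comp, R.map_inv, ← unit_app_R_eq_inv L R adj A]
  exact unit_comp_R_eq L R adj φ

/-- Transport a monoid structure along an isomorphism of the underlying objects. -/
noncomputable def transportMon (M : Mon C) {Z : C} (e : M.X ≅ Z) : Mon C :=
  { X := Z, mon := MonObj.ofIso e }

/-- The transported monoid is isomorphic to the original one. -/
noncomputable def transportMonIso (M : Mon C) {Z : C} (e : M.X ≅ Z) :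
    M ≅ transportMon M e :=
  Mon.mkIso e rfl (by
    show MonObj.mul (X := M.X) ≫ e.hom = (e.hom ⊗ₘ e.hom) ≫ (e.inv ⊗ₘ e.inv) ≫ MonObj.mul (X := M.X) ≫ e.hom
    simp)

end MonoidsEquivAux

open MonoidsEquivAux

/-- Let `L ⊣ R` be an adjunction between monoidal categories whose counit is a natural
isomorphism, with `R` lax monoidal with structure maps `γ₀ = ε R` and `γ = μ R`, and
suppose that `L (γ₀)` and `L (γ_{L X, Y} ∘ (η_X ⊗ id))` are invertible.  Then `Mon_ D` is
equivalent to the full subcategory of `Mon_ C` consisting of the monoid objects whose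
underlying object has an invertible unit component (equivalently, carries an
`R ⋙ L`-algebra structure). -/
theorem monoids_equiv_algebra_monoids
    {C D : Type*} [Category C] [Category D]
    [MonoidalCategory C] [MonoidalCategory D]
    (L : C ⥤ D) (R : D ⥤ C) (adj : L ⊣ R)
    [R.LaxMonoidal] [IsIso adj.counit]
    (h₀ : IsIso (L.map (LaxMonoidal.ε R)))
    (h : ∀ (X : C) (Y : D),
      IsIso (L.map ((adj.unit.app X ⊗ₘ 𝟙 (R.obj Y)) ≫ LaxMonoidal.μ R (L.obj X) Y))) :
    Nonempty (Mon D ≌ ObjectProperty.FullSubcategory fun M : Mon C => IsIso (adj.unit.app M.X)) := by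
  haveI hRff : R.FullyFaithful := adj.fullyFaithfulROfIsIsoCounit
  haveI hRfull : R.Full := hRff.full
  haveI hRfaithful : R.Faithful := hRff.faithful
  -- the target functor
  have hunit : ∀ N : Mon D, IsIso (adj.unit.app ((R.mapMon.obj N).X)) :=
    fun N => isIso_unit_app_R L R adj N.X
  let F : Mon D ⥤ ObjectProperty.FullSubcategory (fun M : Mon C => IsIso (adj.unit.app M.X)) :=
    ObjectProperty.lift _ R.mapMon hunit
  -- faithfulness of `R.mapMon`
  haveI hfaith : R.mapMon.Faithful := by
    constructor
    intro A B g₁ g₂ hg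
    have : R.map g₁.hom = R.map g₂.hom := congrArg Mon.Hom.hom hg
    ext
    exact R.map_injective this
  -- fullness of `R.mapMon`
  haveI hfull : R.mapMon.Full := by
    constructor
    intro A B f
    refine ⟨{ hom := inv (adj.counit.app A.X) ≫ L.map (X := R.obj A.X) (Y := R.obj B.X) f.hom ≫ adj.counit.app B.X,
              isMonHom_hom := ⟨?_, ?_⟩ }, ?_⟩
    · apply L_cancel L R adj (LaxMonoidal.ε R) h₀
      rw [R.map_comp, R_map_conj L R adj f.hom]
      have h1 : ε R ≫ R.map (MonObj.one (X := A.X)) ≫ f.hom = ε R ≫ R.map (MonObj.one (X := B.X)) :=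
        (Category.assoc _ _ _).symm.trans (IsMonHom.one_hom f.hom)
      exact h1
    · apply L_cancel L R adj (LaxMonoidal.μ R A.X A.X) (isIso_L_mu L R adj h A.X A.X)
      rw [R.map_comp, R_map_conj L R adj f.hom, R.map_comp,
        ← LaxMonoidal.μ_natural_assoc (F := R), R_map_conj L R adj f.hom]
      have h1 : μ R A.X A.X ≫ R.map (MonObj.mul (X := A.X)) ≫ f.hom =
          (f.hom ⊗ₘ f.hom) ≫ μ R B.X B.X ≫ R.map (MonObj.mul (X := B.X)) :=
        (Category.assoc _ _ _).symm.trans (IsMonHom.mul_hom f.hom)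
      exact h1
    · ext
      simp only [Functor.mapMon_map_hom]
      exact R_map_conj L R adj f.hom
  haveI hFfaith : F.Faithful := inferInstanceAs (ObjectProperty.lift _ R.mapMon hunit).Faithful
  haveI hFfull : F.Full := inferInstanceAs (ObjectProperty.lift _ R.mapMon hunit).Full
  haveI hFes : F.EssSurj := by
    constructor
    rintro ⟨M, hM⟩
    haveI := hM
    let e : M.X ≅ R.obj (L.obj M.X) := asIso (adj.unit.app M.X)
    let P := transportMon M e
    refine ⟨mkMonD L R adj h₀ h (L.obj M.X) (MonObj.one (X := P.X)) (MonObj.mul (X := P.X))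
      (MonObj.one_mul P.X) (MonObj.mul_one P.X) (MonObj.mul_assoc P.X), ⟨?_⟩⟩
    apply (ObjectProperty.ι _).preimageIso
    exact (mapMonMkMonDIso L R adj h₀ h (L.obj M.X) (MonObj.one (X := P.X)) (MonObj.mul (X := P.X))
      (MonObj.one_mul P.X) (MonObj.mul_one P.X) (MonObj.mul_assoc P.X)
      ≪≫ (transportMonIso M e).symm : R.mapMon.obj _ ≅ M)
  haveI : F.IsEquivalence := {}
  exact ⟨F.asEquivalence⟩
end

section
/- (Porst–Street) Let (L, φ, φ₀) : (C, ⊗, I) ⥤ (D, ⊕, J) be an oplax monoidal functor and let (M, m, e) be a monoid object in C. If the structure morphisms φ₀ : L(I) ⟶ J, φ_{M,M} : L(M ⊗ M) ⟶ L(M) ⊕ L(M), and φ_{M⊗M, M} : L((M ⊗ M) ⊗ M) ⟶ L(M ⊗ M) ⊕ L(M) are invertible, then the triple (L(M), L(m) ∘ (φ_{M,M})⁻¹, L(e) ∘ (φ₀)⁻¹) is a monoid object in D. -/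
/-!
The oplax structure maps commute with images of morphisms under `L`, hence so do their inverses
wherever these exist, and the monoid axioms of `M` can be transported along `L`. The unit laws
then come from the unitality of `(L, δ, η)`. Associativity also needs `δ_{M, M ⊗ M}` to be
invertible, and the associativity coherence of `δ` forces this once `δ_{M, M}` and
`δ_{M ⊗ M, M}` are.
-/

open CategoryTheory Functor MonoidalCategory

section

open OplaxMonoidal

variable {C D : Type*} [Category C] [Category D] [MonoidalCategory C] [MonoidalCategory D]
  (L : C ⥤ D) [L.OplaxMonoidal]

lemma inv_δ_natural_left {X X' : C} (f : X ⟶ X') (Y : C) [IsIso (δ L X Y)]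
    [IsIso (δ L X' Y)] :
    L.map f ▷ L.obj Y ≫ inv (δ L X' Y) = inv (δ L X Y) ≫ L.map (f ▷ Y) := by
  rw [IsIso.eq_inv_comp, ← Category.assoc, δ_natural_left, Category.assoc, IsIso.hom_inv_id,
    Category.comp_id]

lemma inv_δ_natural_right (X : C) {Y Y' : C} (f : Y ⟶ Y') [IsIso (δ L X Y)]
    [IsIso (δ L X Y')] :
    L.obj X ◁ L.map f ≫ inv (δ L X Y') = inv (δ L X Y) ≫ L.map (X ◁ f) := by
  rw [IsIso.eq_inv_comp, ← Category.assoc, δ_natural_right, Category.assoc, IsIso.hom_inv_id,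
    Category.comp_id]

lemma isIso_δ_tensor (X Y Z : C) [IsIso (δ L X Y)] [IsIso (δ L Y Z)] [IsIso (δ L (X ⊗ Y) Z)] :
    IsIso (δ L X (Y ⊗ Z)) := by
  have : IsIso (δ L X (Y ⊗ Z) ≫ L.obj X ◁ δ L Y Z) := by
    rw [δ_comp_whiskerLeft_δ]
    infer_instance
  exact IsIso.of_isIso_comp_right _ (L.obj X ◁ δ L Y Z)

lemma inv_associativity (X Y Z : C) [IsIso (δ L X Y)] [IsIso (δ L Y Z)]
    [IsIso (δ L (X ⊗ Y) Z)] [IsIso (δ L X (Y ⊗ Z))] :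
    inv (δ L X Y) ▷ L.obj Z ≫ inv (δ L (X ⊗ Y) Z) ≫ L.map (α_ X Y Z).hom =
      (α_ (L.obj X) (L.obj Y) (L.obj Z)).hom ≫ L.obj X ◁ inv (δ L Y Z) ≫
        inv (δ L X (Y ⊗ Z)) := by
  rw [← cancel_mono (δ L X (Y ⊗ Z) ≫ L.obj X ◁ δ L Y Z)]
  simp only [Category.assoc]
  rw [← associativity, IsIso.inv_hom_id_assoc, ← comp_whiskerRight_assoc, IsIso.inv_hom_id,
    id_whiskerRight, Category.id_comp]
  simp

variable (X : C) [MonObj X]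

noncomputable def imageMul [IsIso (δ L X X)] : L.obj X ⊗ L.obj X ⟶ L.obj X :=
  inv (δ L X X) ≫ L.map MonObj.mul

noncomputable def imageOne [IsIso (η L)] : 𝟙_ D ⟶ L.obj X :=
  inv (η L) ≫ L.map MonObj.one

lemma image_one_mul [IsIso (η L)] [IsIso (δ L X X)] :
    imageOne L X ▷ L.obj X ≫ imageMul L X = (λ_ (L.obj X)).hom := by
  rw [← cancel_epi (λ_ (L.obj X)).inv, Iso.inv_hom_id, left_unitality, imageOne, imageMul]
  simp only [comp_whiskerRight, Category.assoc, hom_inv_whiskerRight'_assoc, δ_natural_left_assoc,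
    IsIso.hom_inv_id_assoc]
  rw [← L.map_comp, ← L.map_comp, MonObj.one_mul, Iso.inv_hom_id, L.map_id]

lemma image_mul_one [IsIso (η L)] [IsIso (δ L X X)] :
    L.obj X ◁ imageOne L X ≫ imageMul L X = (ρ_ (L.obj X)).hom := by
  rw [← cancel_epi (ρ_ (L.obj X)).inv, Iso.inv_hom_id, right_unitality, imageOne, imageMul]
  simp only [MonoidalCategory.whiskerLeft_comp, Category.assoc, whiskerLeft_hom_inv'_assoc,
    δ_natural_right_assoc, IsIso.hom_inv_id_assoc]
  rw [← L.map_comp, ← L.map_comp, MonObj.mul_one, Iso.inv_hom_id, L.map_id]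

lemma image_mul_assoc [IsIso (δ L X X)] [IsIso (δ L (X ⊗ X) X)] :
    imageMul L X ▷ L.obj X ≫ imageMul L X =
      (α_ (L.obj X) (L.obj X) (L.obj X)).hom ≫ L.obj X ◁ imageMul L X ≫ imageMul L X := by
  have := isIso_δ_tensor L X X X
  calc imageMul L X ▷ L.obj X ≫ imageMul L X
      = inv (δ L X X) ▷ L.obj X ≫ (L.map MonObj.mul ▷ L.obj X ≫ inv (δ L X X)) ≫
          L.map MonObj.mul := by
        simp only [imageMul, comp_whiskerRight, Category.assoc]
    _ = (inv (δ L X X) ▷ L.obj X ≫ inv (δ L (X ⊗ X) X) ≫ L.map (α_ X X X).hom) ≫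
          L.map (X ◁ MonObj.mul ≫ MonObj.mul) := by
        rw [inv_δ_natural_left, Category.assoc, ← L.map_comp, MonObj.mul_assoc, L.map_comp]
        simp only [Category.assoc]
    _ = (α_ _ _ _).hom ≫ L.obj X ◁ inv (δ L X X) ≫
          (inv (δ L X (X ⊗ X)) ≫ L.map (X ◁ MonObj.mul)) ≫ L.map MonObj.mul := by
        rw [inv_associativity, L.map_comp]
        simp only [Category.assoc]
    _ = (α_ (L.obj X) (L.obj X) (L.obj X)).hom ≫ L.obj X ◁ imageMul L X ≫ imageMul L X := by
        rw [← inv_δ_natural_right]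
        simp only [imageMul, MonoidalCategory.whiskerLeft_comp, Category.assoc]

end

/-- (Porst–Street) Let `L` be an oplax monoidal functor with structure morphisms
`η = φ₀ : L (𝟙_ C) ⟶ 𝟙_ D` and `δ = φ : L (X ⊗ Y) ⟶ L X ⊗ L Y`, and let `M` be a monoid
object in `C`.  If `φ₀`, `φ_{M,M}` and `φ_{M ⊗ M, M}` are invertible, then `L M` with
multiplication `L(mul) ∘ φ_{M,M}⁻¹` and unit `L(one) ∘ φ₀⁻¹` is a monoid object in `D`. -/
theorem oplax_image_is_monoid
    {C D : Type*} [Category C] [Category D]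
    [MonoidalCategory C] [MonoidalCategory D]
    (L : C ⥤ D) [L.OplaxMonoidal] (M : Mon C)
    [IsIso (OplaxMonoidal.η L)]
    [IsIso (OplaxMonoidal.δ L M.X M.X)]
    [IsIso (OplaxMonoidal.δ L (M.X ⊗ M.X) M.X)] :
    ((inv (OplaxMonoidal.η L) ≫ L.map (MonObj.one (X := M.X))) ▷ L.obj M.X) ≫
        (inv (OplaxMonoidal.δ L M.X M.X) ≫ L.map (MonObj.mul (X := M.X))) = (λ_ (L.obj M.X)).hom ∧
    (L.obj M.X ◁ (inv (OplaxMonoidal.η L) ≫ L.map (MonObj.one (X := M.X)))) ≫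
        (inv (OplaxMonoidal.δ L M.X M.X) ≫ L.map (MonObj.mul (X := M.X))) = (ρ_ (L.obj M.X)).hom ∧
    ((inv (OplaxMonoidal.δ L M.X M.X) ≫ L.map (MonObj.mul (X := M.X))) ▷ L.obj M.X) ≫
        (inv (OplaxMonoidal.δ L M.X M.X) ≫ L.map (MonObj.mul (X := M.X))) =
      (α_ (L.obj M.X) (L.obj M.X) (L.obj M.X)).hom ≫
        (L.obj M.X ◁ (inv (OplaxMonoidal.δ L M.X M.X) ≫ L.map (MonObj.mul (X := M.X)))) ≫
        (inv (OplaxMonoidal.δ L M.X M.X) ≫ L.map (MonObj.mul (X := M.X))) :=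
  ⟨image_one_mul L M.X, image_mul_one L M.X, image_mul_assoc L M.X⟩
end

section
/- (Doctrinal adjunction, oplax case) Let L ⊣ R be an adjunction between monoidal categories (C, ⊗, I) and (D, ⊕, J), with unit η and counit ε. If L carries an oplax monoidal structure (φ, φ₀), then R carries a lax monoidal structure (γ, γ₀) (given by the mates of φ and φ₀ under the adjunction) such that the colax-lax compatibility identities hold: R(φ₀) ∘ η_I = γ₀, and R(γ_{A,B}) ∘ η_{A⊗B} is the mate-compatibility composite determined by φ_{L A, L B} ∘ (η_A ⊗ η_B); that is, the adjunction becomes a colax-lax monoidal adjunction. Moreover, if L is strong monoidal (φ and φ₀ invertible), then η and ε are monoidal natural transformations with respect to the induced structures. -/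
open CategoryTheory Functor MonoidalCategory

/-- (Doctrinal adjunction, oplax case.)  Let `L ⊣ R` be an adjunction between monoidal
categories in which `L` carries an oplax monoidal structure `(φ, φ₀)` (here given by the
typeclass `L.OplaxMonoidal`, with `φ₀ = OplaxMonoidal.η L` and `φ = OplaxMonoidal.δ L`).
Then `R` carries a lax monoidal structure `(γ, γ₀)` — the mates of `φ` and `φ₀` — making
the adjunction colax-lax: `R(φ₀) ∘ η_I = γ₀` and
`R(φ_{A,B}) ∘ η_{A⊗B} = γ_{L A, L B} ∘ (η_A ⊗ η_B)`.
Moreover, if `L` is strong monoidal (`φ₀` and all `φ_{A,B}` invertible), then the unit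
and counit of the adjunction are monoidal natural transformations with respect to the
induced lax structures (the equations below are the inverse-free formulations). -/
theorem doctrinal_adjunction_oplax
    {C D : Type*} [Category C] [Category D]
    [MonoidalCategory C] [MonoidalCategory D]
    (L : C ⥤ D) (R : D ⥤ C) (adj : L ⊣ R) [L.OplaxMonoidal] :
    ∃ (γ₀ : 𝟙_ C ⟶ R.obj (𝟙_ D)) (γ : ∀ X Y : D, R.obj X ⊗ R.obj Y ⟶ R.obj (X ⊗ Y)),
      -- `γ` is natural in each variable
      (∀ {X Y : D} (f : X ⟶ Y) (X' : D),
        R.map f ▷ R.obj X' ≫ γ Y X' = γ X X' ≫ R.map (f ▷ X')) ∧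
      (∀ {X Y : D} (X' : D) (f : X ⟶ Y),
        R.obj X' ◁ R.map f ≫ γ X' Y = γ X' X ≫ R.map (X' ◁ f)) ∧
      -- lax associativity
      (∀ X Y Z : D,
        γ X Y ▷ R.obj Z ≫ γ (X ⊗ Y) Z ≫ R.map (α_ X Y Z).hom =
          (α_ (R.obj X) (R.obj Y) (R.obj Z)).hom ≫ R.obj X ◁ γ Y Z ≫ γ X (Y ⊗ Z)) ∧
      -- lax unitality
      (∀ X : D, (λ_ (R.obj X)).hom = γ₀ ▷ R.obj X ≫ γ (𝟙_ D) X ≫ R.map (λ_ X).hom) ∧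
      (∀ X : D, (ρ_ (R.obj X)).hom = R.obj X ◁ γ₀ ≫ γ X (𝟙_ D) ≫ R.map (ρ_ X).hom) ∧
      -- colax-lax compatibility: `γ₀` and `γ` are the mates of `φ₀` and `φ`
      (adj.unit.app (𝟙_ C) ≫ R.map (OplaxMonoidal.η L) = γ₀) ∧
      (∀ X Y : C, adj.unit.app (X ⊗ Y) ≫ R.map (OplaxMonoidal.δ L X Y) =
        (adj.unit.app X ⊗ₘ adj.unit.app Y) ≫ γ (L.obj X) (L.obj Y)) ∧
      -- moreover: if `L` is strong monoidal, `η` and `ε` are monoidal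
      ((IsIso (OplaxMonoidal.η L) ∧ ∀ X Y : C, IsIso (OplaxMonoidal.δ L X Y)) →
        -- monoidality of the unit `η : 𝟭 C ⟶ L ⋙ R`
        (adj.unit.app (𝟙_ C) ≫ R.map (OplaxMonoidal.η L) = γ₀) ∧
        (∀ X Y : C, adj.unit.app (X ⊗ Y) ≫ R.map (OplaxMonoidal.δ L X Y) =
          (adj.unit.app X ⊗ₘ adj.unit.app Y) ≫ γ (L.obj X) (L.obj Y)) ∧
        -- monoidality of the counit `ε : R ⋙ L ⟶ 𝟭 D`
        (L.map γ₀ ≫ adj.counit.app (𝟙_ D) = OplaxMonoidal.η L) ∧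
        (∀ X Y : D, L.map (γ X Y) ≫ adj.counit.app (X ⊗ Y) =
          OplaxMonoidal.δ L (R.obj X) (R.obj Y) ≫
            (adj.counit.app X ⊗ₘ adj.counit.app Y))) := by
  let := adj.rightAdjointLaxMonoidal
  exact ⟨LaxMonoidal.ε R, LaxMonoidal.μ R,
    LaxMonoidal.μ_natural_left R, LaxMonoidal.μ_natural_right R, LaxMonoidal.associativity R,
    LaxMonoidal.left_unitality R, LaxMonoidal.right_unitality R,
    adj.unit_app_unit_comp_map_η, adj.unit_app_tensor_comp_map_δ,
    fun _ ↦ ⟨adj.unit_app_unit_comp_map_η, adj.unit_app_tensor_comp_map_δ,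
      adj.map_ε_comp_counit_app_unit, adj.map_μ_comp_counit_app_tensor⟩⟩
end
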